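/- Let T₁, T₂ be countable sets, R₁ ⊆ T₁ × T₁ and R₂ ⊆ T₂ × T₂ relations, ε₁, ε₂ ∈ [0,1], and π₁, π₁' distributions on T₁, π₂, π₂' distributions on T₂. Suppose π₁(X) ≤ π₁'(R₁(X)) + ε₁ for all X ⊆ T₁, and π₂(Y) ≤ π₂'(R₂(Y)) + ε₂ for all Y ⊆ T₂. Then the product distributions satisfy (π₁ × π₂)(Z) ≤ (π₁' × π₂')((R₁ × R₂)(Z)) + (1 - (1-ε₁)(1-ε₂)) for all Z ⊆ T₁ × T₂, where (R₁ × R₂) relates (x₁,x₂) to (y₁,y₂) iff x₁ R₁ y₁ and x₂ R₂ y₂. -/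

import Mathlib

/-!
Write the product mass of `Z` as `∑ x, π₁ x * f x`, where `f x` is the `π₂`-mass of the slice of
`Z` over `x`, and the product mass of its image `W` as `∑ y, π₁' y * g y` in the same way. The
hypothesis on `R₂` gives `f x ≤ g y + ε₂` whenever `R₁ x y`, so the `R₁`-image of each superlevel
set `{x | t < f x - ε₂}` lies in `{y | t < g y}`. Applying the hypothesis on `R₁` to these sets and
integrating over `t ∈ (0, 1 - ε₂]` (layer-cake formula) gives
`∑ π₁ f ≤ ε₂ + ∑ π₁' g + ε₁ (1 - ε₂)`, the first `ε₂` bounding the layer of `f` below height `ε₂`;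
and `ε₂ + ε₁ (1 - ε₂) = 1 - (1 - ε₁) (1 - ε₂)`.
-/

noncomputable def mass {T : Type*} (π : T → ℝ) (X : Set T) : ℝ := ∑' x : X, π x

def img {T : Type*} (R : T → T → Prop) (X : Set T) : Set T := {y | ∃ x ∈ X, R x y}

open MeasureTheory Set
open scoped ENNReal

lemma summable_of_tsum_ne_zero {ι M : Type*} [AddCommMonoid M] [TopologicalSpace M] {f : ι → M}
    (h : ∑' i, f i ≠ 0) : Summable f :=
  by_contra fun hf => h (tsum_eq_zero_of_not_summable hf)

section LayerCake

variable {α : Type*} [MeasurableSpace α] {μ ν : Measure α} {f g : α → ℝ} {ε : ℝ≥0∞}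

lemma lintegral_ofReal_le_of_meas_lt_le {c : ℝ} (hf : Measurable f) (hg : Measurable g)
    (hf0 : 0 ≤ f) (hfc : ∀ x, f x ≤ c) (hg0 : 0 ≤ g)
    (h : ∀ t, μ {x | t < f x} ≤ ν {y | t < g y} + ε) :
    ∫⁻ x, ENNReal.ofReal (f x) ∂μ ≤ ∫⁻ y, ENNReal.ofReal (g y) ∂ν + ε * ENNReal.ofReal c := by
  have hfc' : ∫⁻ t in Ioi c, μ {x | t < f x} = 0 :=
    setLIntegral_eq_zero measurableSet_Ioi fun t ht => by
      simp [show {x | t < f x} = ∅ from eq_empty_of_forall_notMem fun x hx =>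
        (hfc x).not_gt (ht.trans hx)]
  calc ∫⁻ x, ENNReal.ofReal (f x) ∂μ = ∫⁻ t in Ioi 0, μ {x | t < f x} :=
        lintegral_eq_lintegral_meas_lt μ (.of_forall hf0) hf.aemeasurable
    _ ≤ ∫⁻ t in Ioc 0 c ∪ Ioi c, μ {x | t < f x} :=
        lintegral_mono_set fun t ht => (le_or_gt t c).imp (fun htc => ⟨ht, htc⟩) id
    _ ≤ ∫⁻ t in Ioc 0 c, μ {x | t < f x} :=
        (lintegral_union_le _ _ _).trans_eq (by rw [hfc', add_zero])
    _ ≤ ∫⁻ t in Ioc 0 c, (ν {y | t < g y} + ε) :=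
        setLIntegral_mono' measurableSet_Ioc fun t _ => h t
    _ = (∫⁻ t in Ioc 0 c, ν {y | t < g y}) + ε * ENNReal.ofReal c := by
        rw [lintegral_add_right _ measurable_const, setLIntegral_const, Real.volume_Ioc, sub_zero]
    _ ≤ (∫⁻ t in Ioi 0, ν {y | t < g y}) + ε * ENNReal.ofReal c := by
        gcongr; exact Ioc_subset_Ioi_self
    _ = ∫⁻ y, ENNReal.ofReal (g y) ∂ν + ε * ENNReal.ofReal c := by
        rw [lintegral_eq_lintegral_meas_lt ν (.of_forall hg0) hg.aemeasurable]

lemma lintegral_ofReal_le_of_le_img_add [IsProbabilityMeasure μ] {R : α → α → Prop} {δ : ℝ}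
    (hR : ∀ X, μ X ≤ ν (img R X) + ε) (hf : Measurable f) (hg : Measurable g)
    (hf1 : ∀ x, f x ≤ 1) (hg0 : 0 ≤ g) (hfg : ∀ x y, R x y → f x ≤ g y + δ) :
    ∫⁻ x, ENNReal.ofReal (f x) ∂μ ≤
      ∫⁻ y, ENNReal.ofReal (g y) ∂ν + (ENNReal.ofReal δ + ε * ENNReal.ofReal (1 - δ)) := by
  let f' : α → ℝ := fun x => max (f x - δ) 0
  have himg : ∀ t, img R {x | t < f' x} ⊆ {y | t < g y} := by
    rintro t y ⟨x, hx, hxy⟩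
    exact hx.trans_le (max_le (by linarith [hfg x y hxy]) (hg0 y))
  have hf' : ∫⁻ x, ENNReal.ofReal (f' x) ∂μ ≤
      ∫⁻ y, ENNReal.ofReal (g y) ∂ν + ε * ENNReal.ofReal (max (1 - δ) 0) :=
    lintegral_ofReal_le_of_meas_lt_le ((hf.sub_const δ).max measurable_const) hg
      (fun x => le_max_right _ _) (fun x => max_le_max_right 0 (by linarith [hf1 x])) hg0
      fun t => (hR _).trans (by gcongr; exact himg t)
  calc ∫⁻ x, ENNReal.ofReal (f x) ∂μ ≤ ∫⁻ x, (ENNReal.ofReal δ + ENNReal.ofReal (f' x)) ∂μ :=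
        lintegral_mono fun x =>
          (ENNReal.ofReal_le_ofReal (by linarith [le_max_left (f x - δ) 0])).trans
            ENNReal.ofReal_add_le
    _ = ENNReal.ofReal δ + ∫⁻ x, ENNReal.ofReal (f' x) ∂μ := by
        rw [lintegral_add_left measurable_const, lintegral_const, measure_univ, mul_one]
    _ ≤ _ := by
        rw [show ENNReal.ofReal (max (1 - δ) 0) = ENNReal.ofReal (1 - δ) by simp] at hf'
        rw [add_left_comm]; gcongr

end LayerCake

section Mass

variable {T : Type*} {π : T → ℝ}

lemma mass_nonneg (h0 : ∀ t, 0 ≤ π t) (X : Set T) : 0 ≤ mass π X :=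
  tsum_nonneg fun x => h0 x

lemma mass_mono (h0 : ∀ t, 0 ≤ π t) (hs : Summable π) {X Y : Set T} (hXY : X ⊆ Y) :
    mass π X ≤ mass π Y :=
  Summable.tsum_le_tsum_of_inj (inclusion hXY) (inclusion_injective hXY) (fun _ _ => h0 _)
    (fun _ => le_rfl) (hs.subtype X) (hs.subtype Y)

lemma mass_le_tsum (h0 : ∀ t, 0 ≤ π t) (hs : Summable π) (X : Set T) :
    mass π X ≤ ∑' t, π t :=
  hs.tsum_subtype_le π X h0

lemma ofReal_mass (h0 : ∀ t, 0 ≤ π t) (hs : Summable π) (X : Set T) :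
    ENNReal.ofReal (mass π X) = ∑' t, X.indicator (fun t => ENNReal.ofReal (π t)) t := by
  rw [mass, ENNReal.ofReal_tsum_of_nonneg (fun x : X => h0 x) (hs.subtype X)]
  exact tsum_subtype X fun t => ENNReal.ofReal (π t)

lemma ofReal_mass_prod {T₁ T₂ : Type*} {π₁ : T₁ → ℝ} {π₂ : T₂ → ℝ} (h₁0 : ∀ t, 0 ≤ π₁ t)
    (h₂0 : ∀ t, 0 ≤ π₂ t) (hs₁ : Summable π₁) (hs₂ : Summable π₂) (Z : Set (T₁ × T₂)) :
    ENNReal.ofReal (mass (fun z => π₁ z.1 * π₂ z.2) Z) =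
      ∑' x, ENNReal.ofReal (π₁ x) * ENNReal.ofReal (mass π₂ (Prod.mk x ⁻¹' Z)) := by
  have hs : Summable fun z : T₁ × T₂ => π₁ z.1 * π₂ z.2 := hs₁.mul_of_nonneg hs₂ h₁0 h₂0
  rw [ofReal_mass (fun z : T₁ × T₂ => mul_nonneg (h₁0 z.1) (h₂0 z.2)) hs, ENNReal.tsum_prod']
  refine tsum_congr fun x => ?_
  rw [ofReal_mass h₂0 hs₂, ← ENNReal.tsum_mul_left]
  refine tsum_congr fun y => ?_
  by_cases h : (x, y) ∈ Z <;> simp [h, ENNReal.ofReal_mul (h₁0 x)]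

lemma img_preimage_mk_subset {T₁ T₂ : Type*} {R₁ : T₁ → T₁ → Prop} {R₂ : T₂ → T₂ → Prop}
    {Z : Set (T₁ × T₂)} {x y : T₁} (hxy : R₁ x y) :
    img R₂ (Prod.mk x ⁻¹' Z) ⊆ Prod.mk y ⁻¹' img (fun z w => R₁ z.1 w.1 ∧ R₂ z.2 w.2) Z := by
  rintro w ⟨x₂, hx₂, hR⟩
  exact ⟨(x, x₂), hx₂, hxy, hR⟩

end Mass

section WeightMeasure

variable {T : Type*} [MeasurableSpace T]

noncomputable def weightMeasure (π : T → ℝ) : Measure T :=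
  Measure.sum fun t => ENNReal.ofReal (π t) • Measure.dirac t

variable [DiscreteMeasurableSpace T] {π : T → ℝ}

lemma weightMeasure_apply (π : T → ℝ) (X : Set T) :
    weightMeasure π X = ∑' t, X.indicator (fun t => ENNReal.ofReal (π t)) t := by
  rw [weightMeasure, Measure.sum_apply _ .of_discrete]
  refine tsum_congr fun t => ?_
  by_cases h : t ∈ X <;> simp [h]

lemma weightMeasure_eq_ofReal_mass (h0 : ∀ t, 0 ≤ π t) (hs : Summable π) (X : Set T) :
    weightMeasure π X = ENNReal.ofReal (mass π X) := by
  rw [weightMeasure_apply, ofReal_mass h0 hs]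

lemma lintegral_weightMeasure (π : T → ℝ) (f : T → ℝ≥0∞) :
    ∫⁻ t, f t ∂weightMeasure π = ∑' t, ENNReal.ofReal (π t) * f t := by
  simp only [weightMeasure, lintegral_sum_measure, lintegral_smul_measure,
    lintegral_dirac' _ (Measurable.of_discrete), smul_eq_mul]

lemma weightMeasure_le_add_ofReal {π' : T → ℝ} {X Y : Set T} {ε : ℝ} (h0 : ∀ t, 0 ≤ π t)
    (h0' : ∀ t, 0 ≤ π' t) (hs : Summable π) (hs' : Summable π') (hε : 0 ≤ ε)
    (h : mass π X ≤ mass π' Y + ε) :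
    weightMeasure π X ≤ weightMeasure π' Y + ENNReal.ofReal ε := by
  rw [weightMeasure_eq_ofReal_mass h0 hs, weightMeasure_eq_ofReal_mass h0' hs',
    ← ENNReal.ofReal_add (mass_nonneg h0' Y) hε]
  exact ENNReal.ofReal_le_ofReal h

lemma isProbabilityMeasure_weightMeasure (h0 : ∀ t, 0 ≤ π t) (h1 : ∑' t, π t = 1) :
    IsProbabilityMeasure (weightMeasure π) := by
  refine ⟨?_⟩
  rw [weightMeasure_eq_ofReal_mass h0 (summable_of_tsum_ne_zero (h1 ▸ one_ne_zero)), mass,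
    tsum_univ, h1, ENNReal.ofReal_one]

end WeightMeasure

theorem stmt_12_general {T₁ T₂ : Type*}
    (R₁ : T₁ → T₁ → Prop) (R₂ : T₂ → T₂ → Prop)
    (ε₁ ε₂ : ℝ) (hε₁0 : 0 ≤ ε₁) (hε₂0 : 0 ≤ ε₂) (hε₂1 : ε₂ ≤ 1)
    (π₁ π₁' : T₁ → ℝ) (π₂ π₂' : T₂ → ℝ)
    (hπ₁0 : ∀ t, 0 ≤ π₁ t) (hπ₁1 : ∑' t, π₁ t = 1)
    (hπ₁'0 : ∀ t, 0 ≤ π₁' t) (hπ₁'1 : ∑' t, π₁' t = 1)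
    (hπ₂0 : ∀ t, 0 ≤ π₂ t) (hπ₂1 : ∑' t, π₂ t = 1)
    (hπ₂'0 : ∀ t, 0 ≤ π₂' t) (hπ₂'1 : ∑' t, π₂' t = 1)
    (h1 : ∀ X : Set T₁, mass π₁ X ≤ mass π₁' (img R₁ X) + ε₁)
    (h2 : ∀ Y : Set T₂, mass π₂ Y ≤ mass π₂' (img R₂ Y) + ε₂) :
    ∀ Z : Set (T₁ × T₂),
      mass (fun z => π₁ z.1 * π₂ z.2) Z ≤
        mass (fun z => π₁' z.1 * π₂' z.2)
          (img (fun z w => R₁ z.1 w.1 ∧ R₂ z.2 w.2) Z) +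
        (1 - (1 - ε₁) * (1 - ε₂)) := by
  intro Z
  let : MeasurableSpace T₁ := ⊤
  have : DiscreteMeasurableSpace T₁ := ⟨fun _ => trivial⟩
  have := isProbabilityMeasure_weightMeasure hπ₁0 hπ₁1
  have hs₁ : Summable π₁ := summable_of_tsum_ne_zero (hπ₁1 ▸ one_ne_zero)
  have hs₁' : Summable π₁' := summable_of_tsum_ne_zero (hπ₁'1 ▸ one_ne_zero)
  have hs₂ : Summable π₂ := summable_of_tsum_ne_zero (hπ₂1 ▸ one_ne_zero)
  have hs₂' : Summable π₂' := summable_of_tsum_ne_zero (hπ₂'1 ▸ one_ne_zero)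
  have key := lintegral_ofReal_le_of_le_img_add (f := fun x => mass π₂ (Prod.mk x ⁻¹' Z))
    (g := fun y => mass π₂' (Prod.mk y ⁻¹' img (fun z w => R₁ z.1 w.1 ∧ R₂ z.2 w.2) Z))
    (fun X => weightMeasure_le_add_ofReal hπ₁0 hπ₁'0 hs₁ hs₁' hε₁0 (h1 X))
    .of_discrete .of_discrete (fun x => hπ₂1 ▸ mass_le_tsum hπ₂0 hs₂ _)
    (fun y => mass_nonneg hπ₂'0 _) fun x y hxy =>
      (h2 _).trans (add_le_add_left (mass_mono hπ₂'0 hs₂' (img_preimage_mk_subset hxy)) _)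
  have hW0 := mass_nonneg (fun z : T₁ × T₂ => mul_nonneg (hπ₁'0 z.1) (hπ₂'0 z.2))
    (img (fun z w => R₁ z.1 w.1 ∧ R₂ z.2 w.2) Z)
  rw [lintegral_weightMeasure, lintegral_weightMeasure, ← ofReal_mass_prod hπ₁0 hπ₂0 hs₁ hs₂,
    ← ofReal_mass_prod hπ₁'0 hπ₂'0 hs₁' hs₂', ← ENNReal.ofReal_mul hε₁0,
    ← ENNReal.ofReal_add hε₂0 (by nlinarith), ← ENNReal.ofReal_add hW0 (by nlinarith),
    ENNReal.ofReal_le_ofReal_iff (by nlinarith)] at key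
  linarith

/-- product lemma for the ε-lifting. -/
theorem stmt_12 {T₁ T₂ : Type*} [Countable T₁] [Countable T₂]
    (R₁ : T₁ → T₁ → Prop) (R₂ : T₂ → T₂ → Prop)
    (ε₁ ε₂ : ℝ) (hε₁0 : 0 ≤ ε₁) (hε₁1 : ε₁ ≤ 1) (hε₂0 : 0 ≤ ε₂) (hε₂1 : ε₂ ≤ 1)
    (π₁ π₁' : T₁ → ℝ) (π₂ π₂' : T₂ → ℝ)
    (hπ₁0 : ∀ t, 0 ≤ π₁ t) (hπ₁1 : ∑' t, π₁ t = 1)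
    (hπ₁'0 : ∀ t, 0 ≤ π₁' t) (hπ₁'1 : ∑' t, π₁' t = 1)
    (hπ₂0 : ∀ t, 0 ≤ π₂ t) (hπ₂1 : ∑' t, π₂ t = 1)
    (hπ₂'0 : ∀ t, 0 ≤ π₂' t) (hπ₂'1 : ∑' t, π₂' t = 1)
    (h1 : ∀ X : Set T₁, mass π₁ X ≤ mass π₁' (img R₁ X) + ε₁)
    (h2 : ∀ Y : Set T₂, mass π₂ Y ≤ mass π₂' (img R₂ Y) + ε₂) :
    ∀ Z : Set (T₁ × T₂),
      mass (fun z => π₁ z.1 * π₂ z.2) Z ≤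
        mass (fun z => π₁' z.1 * π₂' z.2)
          (img (fun z w => R₁ z.1 w.1 ∧ R₂ z.2 w.2) Z) +
        (1 - (1 - ε₁) * (1 - ε₂)) :=
  stmt_12_general R₁ R₂ ε₁ ε₂ hε₁0 hε₂0 hε₂1 π₁ π₁' π₂ π₂' hπ₁0 hπ₁1 hπ₁'0 hπ₁'1 hπ₂0 hπ₂1 hπ₂'0
    hπ₂'1 h1 h2
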